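/- Let Γ be a simple graph on a vertex set V and let S ⊆ V. Then the canonical homomorphism from the right-angled Artin group of the induced subgraph, A_{Γ[S]}, to A_Γ, sending the generator corresponding to s ∈ S to of s, is injective; that is, special subgroups of a right-angled Artin group are right-angled Artin groups on the induced subgraphs. -/

import Mathlib

/-- The set of commutator relators of a right-angled Artin group. -/
def raagRels {V : Type*} (Γ : SimpleGraph V) : Set (FreeGroup V) :=
  {r | ∃ u v : V, Γ.Adj u v ∧
    r = FreeGroup.of u * FreeGroup.of v * (FreeGroup.of u)⁻¹ * (FreeGroup.of v)⁻¹}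

/-- The right-angled Artin group of the graph `Γ`. -/
abbrev RAAG {V : Type*} (Γ : SimpleGraph V) : Type _ :=
  PresentedGroup (raagRels Γ)

/-- The canonical generator of `RAAG Γ` corresponding to a vertex. -/
def RAAG.of {V : Type*} (Γ : SimpleGraph V) (v : V) : RAAG Γ :=
  PresentedGroup.of v

/-! The map `φ : A_{Γ[S]} → A_Γ` has a retraction `A_Γ → A_{Γ[S]}` that fixes the generators
in `S` and kills all the others; it is well defined because a commutator relator of `Γ` either
lies in `Γ[S]` or involves a generator sent to `1`. Hence `φ` is injective. -/

namespace RAAG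

variable {V W G : Type*} {Γ : SimpleGraph V} {Δ : SimpleGraph W} [Group G]

theorem commute_of_adj {u v : V} (h : Γ.Adj u v) : Commute (of Γ u) (of Γ v) :=
  commutatorElement_eq_one_iff_commute.mp (PresentedGroup.one_of_mem ⟨u, v, h, rfl⟩)

def lift (f : V → G) (hf : ∀ ⦃u v⦄, Γ.Adj u v → Commute (f u) (f v)) : RAAG Γ →* G :=
  PresentedGroup.toGroup (f := f) <| by
    rintro r ⟨u, v, huv, rfl⟩
    simpa only [map_mul, map_inv, FreeGroup.lift_apply_of, commutatorElement_def] using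
      (hf huv).commutator_eq

@[simp]
theorem lift_of (f : V → G) (hf : ∀ ⦃u v⦄, Γ.Adj u v → Commute (f u) (f v)) (v : V) :
    lift f hf (of Γ v) = f v :=
  PresentedGroup.toGroup.of _

@[ext]
theorem hom_ext {φ ψ : RAAG Γ →* G} (h : ∀ v, φ (of Γ v) = ψ (of Γ v)) : φ = ψ :=
  PresentedGroup.ext h

def map (f : Γ →g Δ) : RAAG Γ →* RAAG Δ :=
  lift (fun v => of Δ (f v)) fun _ _ h => commute_of_adj (f.map_adj h)

@[simp]
theorem map_of (f : Γ →g Δ) (v : V) : map f (of Γ v) = of Δ (f v) :=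
  lift_of _ _ v

open Classical in
noncomputable def retract (Γ : SimpleGraph V) (S : Set V) : RAAG Γ →* RAAG (Γ.induce S) :=
  lift (fun v => if hv : v ∈ S then of _ ⟨v, hv⟩ else 1) fun u v huv => by
    by_cases hu : u ∈ S
    · by_cases hv : v ∈ S
      · simpa only [dif_pos hu, dif_pos hv] using
          commute_of_adj (Γ := Γ.induce S) (u := ⟨u, hu⟩) (v := ⟨v, hv⟩) huv
      · simp only [dif_neg hv, Commute.one_right]
    · simp only [dif_neg hu, Commute.one_left]

theorem retract_comp_map_induce (Γ : SimpleGraph V) (S : Set V) :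
    (retract Γ S).comp (map (SimpleGraph.Embedding.induce S).toHom) = MonoidHom.id _ := by
  ext ⟨v, hv⟩
  simp [retract, dif_pos hv]

end RAAG

/-- Special subgroups of a right-angled Artin group: the canonical map from the
right-angled Artin group of an induced subgraph `Γ[S]` to `A_Γ`, sending
generators to generators, is injective. -/
theorem raag_induced_subgraph_embeds {V : Type*} (Γ : SimpleGraph V) (S : Set V) :
    ∃ φ : RAAG (Γ.induce S) →* RAAG Γ,
      (∀ s : S, φ (RAAG.of (Γ.induce S) s) = RAAG.of Γ (s : V)) ∧
        Function.Injective φ :=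
  ⟨RAAG.map (SimpleGraph.Embedding.induce S).toHom, fun s => RAAG.map_of _ s,
    Function.LeftInverse.injective (DFunLike.congr_fun (RAAG.retract_comp_map_induce Γ S))⟩
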